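/- Let q, a ∈ ℂ generic. For every n ≥ 0 and x ≠ 0: ₂φ₁(q^{−n}, −a qⁿ; 0; q, qx) = (−1)ⁿ q^{n²} aⁿ ₃φ₀(q^{−n}, −a qⁿ, x^{−1}; —; q, −a^{−1} x). -/

import Mathlib

/-!
Both sides are polynomials of degree `n` in `x`: the `₂φ₁` side in the monomial basis, the `₃φ₀`
side (with `b = -a qⁿ`) in the Newton basis `∏ i < k, (x - qⁱ)` at the nodes `1, q, q², …`.
The q-difference `f(q x) - f(x)` of either series of degree `n + 1` is the same multiple of `x`
times the corresponding series of degree `n` with `b` replaced by `b q`, so by induction on `n`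
their difference is invariant under `x ↦ q x`. Such a polynomial that vanishes at `1` vanishes at
every `qᵐ`, hence is zero since `q` is neither zero nor a root of unity. At `x = 1` the Newton side
is `bⁿ`, and so is the `₂φ₁` side by the q-Chu–Vandermonde sum with `c = 0`, which is proved by the
same argument in the variable `b`.
-/

open Finset

/-- q-shifted factorial (a;q)_k -/
noncomputable def qPoch (a q : ℂ) (k : ℕ) : ℂ := ∏ i ∈ range k, (1 - a * q ^ i)

open Polynomial Function

section QPochhammer

variable (a q : ℂ) (k : ℕ)

lemma qPoch_succ : qPoch a q (k + 1) = qPoch a q k * (1 - a * q ^ k) :=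
  prod_range_succ _ _

lemma qPoch_succ' : qPoch a q (k + 1) = (1 - a) * qPoch (a * q) q k := by
  simp only [qPoch]
  rw [prod_range_succ', pow_zero, mul_one, mul_comm]
  exact congrArg _ (prod_congr rfl fun i _ => by ring)

lemma qPoch_succ_sub_qPoch_mul_succ :
    qPoch a q (k + 1) - qPoch (a * q) q (k + 1) = a * (q ^ (k + 1) - 1) * qPoch (a * q) q k := by
  rw [qPoch_succ', qPoch_succ]
  ring

lemma qPoch_one (hk : k ≠ 0) : qPoch 1 q k = 0 :=
  prod_eq_zero (mem_range.2 (Nat.pos_of_ne_zero hk)) (by simp)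

lemma qPoch_inv_mul_pow {x : ℂ} (hx : x ≠ 0) :
    qPoch x⁻¹ q k * x ^ k = ∏ i ∈ range k, (x - q ^ i) := by
  rw [qPoch, pow_eq_prod_const, ← prod_mul_distrib]
  refine prod_congr rfl fun i _ => ?_
  field_simp

lemma qPoch_self_ne_zero {q : ℂ} (hq : ∀ m : ℕ, m ≠ 0 → q ^ m ≠ 1) (k : ℕ) : qPoch q q k ≠ 0 :=
  prod_ne_zero_iff.2 fun i _ => by
    rw [← pow_succ', sub_ne_zero]
    exact (hq (i + 1) i.succ_ne_zero).symm

end QPochhammer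

lemma pow_injective_of_forall_pow_ne_one {G₀ : Type*} [GroupWithZero G₀] {q : G₀} (hq : q ≠ 0)
    (hq1 : ∀ m : ℕ, m ≠ 0 → q ^ m ≠ 1) : Injective (q ^ · : ℕ → G₀) := by
  have hu : ¬IsOfFinOrder (Units.mk0 q hq) := by
    rw [← Units.isOfFinOrder_val, isOfFinOrder_iff_pow_eq_one]
    rintro ⟨m, hm, h⟩
    exact hq1 m hm.ne' h
  intro i j h
  exact injective_pow_iff_not_isOfFinOrder.2 hu (Units.ext (by simpa using h))

theorem eq_of_qDifference_eq {R : Type*} [CommRing R] [IsDomain R] {q : R}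
    (hq : Injective (q ^ · : ℕ → R)) {f g : R → R}
    (hf : ∃ p : R[X], ∀ x, f x = p.eval x) (hg : ∃ p : R[X], ∀ x, g x = p.eval x)
    (h1 : f 1 = g 1) (hdiff : ∀ x, f (q * x) - f x = g (q * x) - g x) : f = g := by
  obtain ⟨p, hp⟩ := hf
  obtain ⟨r, hr⟩ := hg
  have hroots : ∀ m : ℕ, (p - r).IsRoot (q ^ m) := by
    intro m
    induction m with
    | zero => simpa [← hp, ← hr, sub_eq_zero] using h1
    | succ m ih =>
      have := hdiff (q ^ m)
      simp only [IsRoot, eval_sub, ← hp, ← hr] at ih ⊢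
      rw [pow_succ']
      linear_combination this + ih
  have hpr : p - r = 0 :=
    eq_zero_of_infinite_isRoot _ (Set.infinite_of_injective_forall_mem hq hroots)
  funext x
  rw [hp, hr, ← sub_eq_zero, ← eval_sub, hpr, eval_zero]

section Series

variable {q : ℂ}

noncomputable def phiCoeff (q : ℂ) (n : ℕ) (b : ℂ) (k : ℕ) : ℂ :=
  qPoch (q ^ (-(n : ℤ))) q k * qPoch b q k / qPoch q q k

/-- `phi21 q n b x` is `₂φ₁(q⁻ⁿ, b; 0; q, q x)`. -/
noncomputable def phi21 (q : ℂ) (n : ℕ) (b x : ℂ) : ℂ :=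
  ∑ k ∈ range (n + 1), phiCoeff q n b k * (q * x) ^ k

/-- The `₃φ₀` side with `b = -a qⁿ`, written in the Newton basis
`∏ i < k, (x - qⁱ) = (x⁻¹; q)ₖ xᵏ`. -/
noncomputable def newtonSeries (q : ℂ) (n : ℕ) (b x : ℂ) : ℂ :=
  ∑ k ∈ range (n + 1),
    phiCoeff q n b k * b ^ (n - k) * q ^ (k * (n - k + 1)) * ∏ i ∈ range k, (x - q ^ i)

@[simp]
lemma phiCoeff_zero (n : ℕ) (b : ℂ) : phiCoeff q n b 0 = 1 := by
  simp [phiCoeff, qPoch]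

lemma qPoch_zpow_neg_succ (hq : q ≠ 0) (n k : ℕ) :
    qPoch (q ^ (-((n + 1 : ℕ) : ℤ))) q (k + 1)
      = (1 - q ^ (-((n + 1 : ℕ) : ℤ))) * qPoch (q ^ (-(n : ℤ))) q k := by
  rw [qPoch_succ', ← zpow_add_one₀ hq]
  push_cast
  ring_nf

lemma phiCoeff_succ_succ (hq : q ≠ 0) (hq1 : ∀ m : ℕ, m ≠ 0 → q ^ m ≠ 1) (n : ℕ) (b : ℂ)
    (k : ℕ) :
    phiCoeff q (n + 1) b (k + 1) * (1 - q ^ (k + 1))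
      = (1 - q ^ (-((n + 1 : ℕ) : ℤ))) * (1 - b) * phiCoeff q n (b * q) k := by
  have hk := qPoch_self_ne_zero hq1 k
  have hk1 : 1 - q ^ (k + 1) ≠ 0 := sub_ne_zero.2 (hq1 (k + 1) k.succ_ne_zero).symm
  rw [phiCoeff, phiCoeff, qPoch_zpow_neg_succ hq, qPoch_succ' b, qPoch_succ q q k, ← pow_succ']
  field_simp

lemma phiCoeff_succ_sub (hq : q ≠ 0) (hq1 : ∀ m : ℕ, m ≠ 0 → q ^ m ≠ 1) (n : ℕ) (b : ℂ)
    (k : ℕ) :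
    phiCoeff q (n + 1) b (k + 1) - phiCoeff q (n + 1) (b * q) (k + 1)
      = -(1 - q ^ (-((n + 1 : ℕ) : ℤ))) * b * phiCoeff q n (b * q) k := by
  have hk := qPoch_self_ne_zero hq1 k
  have hk1 : 1 - q ^ (k + 1) ≠ 0 := sub_ne_zero.2 (hq1 (k + 1) k.succ_ne_zero).symm
  rw [phiCoeff, phiCoeff, phiCoeff, ← sub_div, ← mul_sub, qPoch_succ_sub_qPoch_mul_succ,
    qPoch_zpow_neg_succ hq, qPoch_succ q q k, ← pow_succ']
  field_simp
  ring

lemma prod_sub_pow_qDifference (x : ℂ) (k : ℕ) :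
    ∏ i ∈ range (k + 1), (q * x - q ^ i) - ∏ i ∈ range (k + 1), (x - q ^ i)
      = (q ^ (k + 1) - 1) * x * ∏ i ∈ range k, (x - q ^ i) := by
  have hshift : ∏ i ∈ range k, (q * x - q ^ (i + 1)) = q ^ k * ∏ i ∈ range k, (x - q ^ i) := by
    rw [pow_eq_prod_const, ← prod_mul_distrib]
    exact prod_congr rfl fun i _ => by ring
  rw [prod_range_succ' (fun i => q * x - q ^ i), prod_range_succ, hshift]
  ring

lemma phi21_qDifference (hq : q ≠ 0) (hq1 : ∀ m : ℕ, m ≠ 0 → q ^ m ≠ 1) (n : ℕ) (b x : ℂ) :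
    phi21 q (n + 1) b (q * x) - phi21 q (n + 1) b x
      = -(1 - q ^ (-((n + 1 : ℕ) : ℤ))) * (1 - b) * q * x * phi21 q n (b * q) x := by
  rw [phi21, phi21, phi21, ← sum_sub_distrib, sum_range_succ', mul_sum]
  simp only [pow_zero, mul_one, sub_self, add_zero]
  refine sum_congr rfl fun k _ => ?_
  linear_combination (-(q * x) ^ (k + 1)) * phiCoeff_succ_succ hq hq1 n b k

lemma newtonSeries_qDifference (hq : q ≠ 0) (hq1 : ∀ m : ℕ, m ≠ 0 → q ^ m ≠ 1) (n : ℕ)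
    (b x : ℂ) :
    newtonSeries q (n + 1) b (q * x) - newtonSeries q (n + 1) b x
      = -(1 - q ^ (-((n + 1 : ℕ) : ℤ))) * (1 - b) * q * x * newtonSeries q n (b * q) x := by
  rw [newtonSeries, newtonSeries, newtonSeries, ← sum_sub_distrib, sum_range_succ', mul_sum]
  simp only [prod_range_zero, sub_self, add_zero]
  refine sum_congr rfl fun k hk => ?_
  obtain ⟨m, rfl⟩ := Nat.exists_eq_add_of_le (Nat.lt_succ_iff.1 (mem_range.1 hk))
  simp only [Nat.add_sub_add_right, Nat.add_sub_cancel_left]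
  linear_combination (phiCoeff q (k + m + 1) b (k + 1) * b ^ m * q ^ ((k + 1) * (m + 1)))
      * prod_sub_pow_qDifference (q := q) x k
    - (b ^ m * q ^ ((k + 1) * (m + 1)) * x * ∏ i ∈ range k, (x - q ^ i))
      * phiCoeff_succ_succ hq hq1 (k + m) b k

lemma phi21_one_qDifference (hq : q ≠ 0) (hq1 : ∀ m : ℕ, m ≠ 0 → q ^ m ≠ 1) (n : ℕ) (b : ℂ) :
    phi21 q (n + 1) b 1 - phi21 q (n + 1) (b * q) 1
      = -(1 - q ^ (-((n + 1 : ℕ) : ℤ))) * q * b * phi21 q n (b * q) 1 := by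
  rw [phi21, phi21, phi21, ← sum_sub_distrib, sum_range_succ', mul_sum]
  simp only [phiCoeff_zero, sub_self, add_zero]
  refine sum_congr rfl fun k _ => ?_
  linear_combination (q ^ (k + 1)) * phiCoeff_succ_sub hq hq1 n b k

lemma exists_eval_eq_phi21 (n : ℕ) (b : ℂ) : ∃ p : ℂ[X], ∀ x, phi21 q n b x = p.eval x :=
  ⟨∑ k ∈ range (n + 1), C (phiCoeff q n b k) * (C q * X) ^ k, fun x => by
    simp [phi21, eval_finsetSum]⟩

lemma exists_eval_eq_phi21_one (n : ℕ) : ∃ p : ℂ[X], ∀ b, phi21 q n b 1 = p.eval b :=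
  ⟨∑ k ∈ range (n + 1), C (qPoch (q ^ (-(n : ℤ))) q k / qPoch q q k * q ^ k) *
      ∏ i ∈ range k, (1 - X * C (q ^ i)), fun b => by
    simp only [phi21, phiCoeff, qPoch, eval_finsetSum, eval_mul, eval_C, eval_prod, eval_sub,
      eval_one, eval_X, mul_one]
    exact sum_congr rfl fun k _ => by ring⟩

lemma exists_eval_eq_newtonSeries (n : ℕ) (b : ℂ) :
    ∃ p : ℂ[X], ∀ x, newtonSeries q n b x = p.eval x :=
  ⟨∑ k ∈ range (n + 1), C (phiCoeff q n b k * b ^ (n - k) * q ^ (k * (n - k + 1))) *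
      ∏ i ∈ range k, (X - C (q ^ i)), fun x => by
    simp [newtonSeries, eval_finsetSum, eval_prod]⟩

lemma phi21_param_one (n : ℕ) (x : ℂ) : phi21 q n 1 x = 1 := by
  rw [phi21, sum_eq_single 0 (fun k _ hk => by simp [phiCoeff, qPoch_one q k hk])
    (fun h => absurd (mem_range.2 n.succ_pos) h)]
  simp

lemma newtonSeries_one (n : ℕ) (b : ℂ) : newtonSeries q n b 1 = b ^ n := by
  rw [newtonSeries, sum_eq_single 0
    (fun k _ hk => by rw [prod_eq_zero (mem_range.2 (Nat.pos_of_ne_zero hk)) (by simp), mul_zero])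
    (fun h => absurd (mem_range.2 n.succ_pos) h)]
  simp

/-- The q-Chu–Vandermonde sum `₂φ₁(q⁻ⁿ, b; c; q, q) = (c/b; q)ₙ bⁿ / (c; q)ₙ` at `c = 0`. -/
theorem phi21_one (hq : q ≠ 0) (hq1 : ∀ m : ℕ, m ≠ 0 → q ^ m ≠ 1) (n : ℕ) (b : ℂ) :
    phi21 q n b 1 = b ^ n := by
  induction n generalizing b with
  | zero => simp [phi21]
  | succ n ih =>
    refine congrFun (eq_of_qDifference_eq (g := (· ^ (n + 1)))
      (pow_injective_of_forall_pow_ne_one hq hq1) (exists_eval_eq_phi21_one (n + 1))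
      ⟨X ^ (n + 1), fun b => by simp⟩ (by simp [phi21_param_one]) fun b => ?_) b
    have hdiff := phi21_one_qDifference hq hq1 n b
    rw [mul_comm b q, ih, zpow_neg, zpow_natCast] at hdiff
    field_simp at hdiff
    refine mul_left_cancel₀ (pow_ne_zero (n + 1) hq) ?_
    linear_combination -hdiff

theorem phi21_eq_newtonSeries (hq : q ≠ 0) (hq1 : ∀ m : ℕ, m ≠ 0 → q ^ m ≠ 1) (n : ℕ)
    (b : ℂ) : phi21 q n b = newtonSeries q n b := by
  induction n generalizing b with
  | zero => funext x; simp [phi21, newtonSeries]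
  | succ n ih =>
    refine eq_of_qDifference_eq (pow_injective_of_forall_pow_ne_one hq hq1)
      (exists_eval_eq_phi21 _ _) (exists_eval_eq_newtonSeries _ _) ?_ fun x => ?_
    · rw [phi21_one hq hq1, newtonSeries_one]
    · rw [phi21_qDifference hq hq1, newtonSeries_qDifference hq hq1, ih]

end Series

lemma threePhiZero_weight {q a x : ℂ} (hq : q ≠ 0) (ha : a ≠ 0) (hx : x ≠ 0) {n k : ℕ}
    (hk : k ≤ n) :
    (-1) ^ n * q ^ (n ^ 2) * a ^ n *
        (((-1 : ℂ) ^ k * q ^ (k * (k - 1) / 2)) ^ (-(2 : ℤ)) * (-a⁻¹ * x) ^ k * qPoch x⁻¹ q k)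
      = (-a * q ^ n) ^ (n - k) * q ^ (k * (n - k + 1)) * ∏ i ∈ range k, (x - q ^ i) := by
  obtain ⟨m, rfl⟩ := Nat.exists_eq_add_of_le hk
  have htri : k * (k - 1) / 2 * 2 + k = k * k := by
    rw [Nat.div_mul_cancel (Nat.even_mul_pred_self k).two_dvd, Nat.mul_sub_one,
      Nat.sub_add_cancel (Nat.le_mul_self k)]
  set t := k * (k - 1) / 2
  have hsq : (k + m) ^ 2 = t * 2 + (k + 2 * k * m + m ^ 2) := by
    rw [add_sq, sq k, ← htri]
    ring
  rw [← qPoch_inv_mul_pow q k hx, Nat.add_sub_cancel_left, hsq, zpow_neg, zpow_two,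
    pow_add (-1 : ℂ), neg_mul, neg_pow (a⁻¹ * x), mul_pow a⁻¹, inv_pow]
  rcases neg_one_pow_eq_or ℂ k with h | h <;> rw [h] <;> field_simp <;> ring

/-- Identity between the ₂φ₁ and ₃φ₀ representations of the q-Bessel polynomial
y_n(x;a;q); each term of the ₃φ₀ series carries the factor
((−1)^k q^{k(k−1)/2})^{s−r+1} with s − r + 1 = −2. -/
theorem qBessel_two_representations (q a : ℂ)
    (hq : q ≠ 0) (hq1 : ∀ m : ℤ, m ≠ 0 → q ^ m ≠ 1) (ha : a ≠ 0)
    (n : ℕ) (x : ℂ) (hx : x ≠ 0) :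
    (∑ k ∈ range (n + 1),
        qPoch (q ^ (-(n : ℤ))) q k * qPoch (-a * q ^ n) q k / qPoch q q k * (q * x) ^ k)
    = (-1) ^ n * q ^ (n ^ 2) * a ^ n *
      ∑ k ∈ range (n + 1),
        qPoch (q ^ (-(n : ℤ))) q k * qPoch (-a * q ^ n) q k * qPoch x⁻¹ q k /
          qPoch q q k *
        ((-1 : ℂ) ^ k * q ^ (k * (k - 1) / 2)) ^ (-(2 : ℤ)) * (-a⁻¹ * x) ^ k := by
  have hq1' : ∀ m : ℕ, m ≠ 0 → q ^ m ≠ 1 := fun m hm => by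
    simpa using hq1 m (Int.natCast_ne_zero.2 hm)
  calc _ = phi21 q n (-a * q ^ n) x := rfl
    _ = newtonSeries q n (-a * q ^ n) x := by rw [phi21_eq_newtonSeries hq hq1']
    _ = _ := by
      rw [newtonSeries, mul_sum]
      refine sum_congr rfl fun k hk => ?_
      rw [phiCoeff]
      linear_combination (-(qPoch (q ^ (-(n : ℤ))) q k * qPoch (-a * q ^ n) q k / qPoch q q k))
        * threePhiZero_weight hq ha hx (Nat.lt_succ_iff.1 (mem_range.1 hk))
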